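/- Let (X,d) be a metric space and f : X → ℝ a bounded continuous function with sup f = M < 1. Then Sf(y) := inf_{x ∈ X} { 1 − cos²(d_{π/2}(x,y)) / (1 − f(x)) } is bounded and continuous with sup Sf < 1; in fact Sf is Lipschitz: |Sf(y) − Sf(y′)| ≤ 2 d_{π/2}(y,y′)/(1 − M) for all y, y′ ∈ X. -/

import Mathlib

/-!
Each term `1 - cos² (d_{π/2}(x, y)) / (1 - f x)` is `1 / (1 - M)`-Lipschitz in `y` for the
truncated metric, because `cos² t = (1 + cos 2t) / 2` is `1`-Lipschitz and `d_{π/2}(x, ·)` is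
`1`-Lipschitz for `d_{π/2}`; an infimum of uniformly Lipschitz functions is Lipschitz with the same
constant. All terms lie in `[1 - 1 / (1 - M), 1]`, and the term `x = y` equals
`1 - 1 / (1 - f y)`, which stays below `1` uniformly because `f` is bounded below.
-/

open Real Set

/-- `Sf(y) = inf_{x ∈ X} (1 − cos²(d_{π/2}(x,y))/(1−f(x)))`, for `sup f < 1`. -/
noncomputable def Stransform {X : Type*} [MetricSpace X] (f : X → ℝ) (y : X) : ℝ :=
  ⨅ x : X, (1 - Real.cos (min (dist x y) (π / 2)) ^ 2 / (1 - f x))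

theorem abs_ciInf_sub_ciInf_le {ι α : Type*} [Nonempty ι] [ConditionallyCompleteLinearOrder α]
    [AddCommGroup α] [IsOrderedAddMonoid α] {g h : ι → α} {L : α}
    (hg : BddBelow (range g)) (hh : BddBelow (range h)) (hgh : ∀ i, |g i - h i| ≤ L) :
    |(⨅ i, g i) - ⨅ i, h i| ≤ L := by
  have key : ∀ {u v : ι → α}, BddBelow (range u) → (∀ i, u i - v i ≤ L) →
      (⨅ i, u i) - ⨅ i, v i ≤ L := fun hu huv => by
    rw [sub_le_comm]
    exact le_ciInf fun i => sub_le_comm.1 ((sub_le_sub_right (ciInf_le hu i) _).trans (huv i))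
  rw [abs_sub_le_iff]
  exact ⟨key hg fun i => (abs_sub_le_iff.1 (hgh i)).1,
    key hh fun i => (abs_sub_le_iff.1 (hgh i)).2⟩

theorem abs_cos_sq_sub_cos_sq_le (s t : ℝ) : |cos s ^ 2 - cos t ^ 2| ≤ |s - t| := by
  have h := abs_cos_sub_cos_le (2 * s) (2 * t)
  rw [← mul_sub, abs_mul, abs_two] at h
  calc |cos s ^ 2 - cos t ^ 2| = |cos (2 * s) - cos (2 * t)| / 2 := by
        rw [cos_sq s, cos_sq t, ← abs_two, ← abs_div]; ring_nf
    _ ≤ |s - t| := by linarith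

theorem abs_min_dist_sub_min_dist_le {X : Type*} [PseudoMetricSpace X] {c : ℝ} (hc : 0 ≤ c)
    (x y y' : X) : |min (dist x y) c - min (dist x y') c| ≤ min (dist y y') c := by
  refine le_min ?_ ?_
  · calc |min (dist x y) c - min (dist x y') c|
        ≤ max |dist x y - dist x y'| |c - c| := abs_min_sub_min_le_max _ _ _ _
      _ ≤ dist y y' := by
        rw [sub_self, abs_zero, max_le_iff]
        exact ⟨dist_comm x y ▸ dist_comm x y' ▸ abs_dist_sub_le y y' x, dist_nonneg⟩
  · exact abs_sub_le_of_nonneg_of_le (le_min dist_nonneg hc) (min_le_right _ _)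
      (le_min dist_nonneg hc) (min_le_right _ _)

theorem one_sub_inv_le_one_sub_cos_sq_div {a M : ℝ} (ha : a ≤ M) (hM1 : M < 1) (t : ℝ) :
    1 - 1 / (1 - M) ≤ 1 - cos t ^ 2 / (1 - a) :=
  sub_le_sub_left (div_le_div₀ zero_le_one (cos_sq_le_one t) (by linarith) (by linarith)) 1

section Stransform

variable {X : Type*} [MetricSpace X] {f : X → ℝ} {M : ℝ}

theorem bddBelow_range_Stransform (hfM : ∀ x, f x ≤ M) (hM1 : M < 1) (y : X) :
    BddBelow (range fun x => 1 - cos (min (dist x y) (π / 2)) ^ 2 / (1 - f x)) :=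
  ⟨_, forall_mem_range.2 fun x => one_sub_inv_le_one_sub_cos_sq_div (hfM x) hM1 _⟩

theorem Stransform_le (hfM : ∀ x, f x ≤ M) (hM1 : M < 1) (x y : X) :
    Stransform f y ≤ 1 - cos (min (dist x y) (π / 2)) ^ 2 / (1 - f x) :=
  ciInf_le (bddBelow_range_Stransform hfM hM1 y) x

theorem Stransform_le_one_sub_inv (hfM : ∀ x, f x ≤ M) (hM1 : M < 1) (y : X) :
    Stransform f y ≤ 1 - 1 / (1 - f y) := by
  simpa [min_eq_left pi_div_two_pos.le] using Stransform_le hfM hM1 y y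

theorem Stransform_le_one (hfM : ∀ x, f x ≤ M) (hM1 : M < 1) (y : X) : Stransform f y ≤ 1 := by
  have := hfM y
  have : 0 ≤ 1 / (1 - f y) := by
    apply div_nonneg zero_le_one; linarith
  linarith [Stransform_le_one_sub_inv hfM hM1 y]

theorem one_sub_inv_le_Stransform (hfM : ∀ x, f x ≤ M) (hM1 : M < 1) (y : X) :
    1 - 1 / (1 - M) ≤ Stransform f y :=
  have : Nonempty X := ⟨y⟩
  le_ciInf fun x => one_sub_inv_le_one_sub_cos_sq_div (hfM x) hM1 _

theorem abs_Stransform_sub_le (hfM : ∀ x, f x ≤ M) (hM1 : M < 1) (y y' : X) :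
    |Stransform f y - Stransform f y'| ≤ min (dist y y') (π / 2) / (1 - M) := by
  have : Nonempty X := ⟨y⟩
  refine abs_ciInf_sub_ciInf_le (bddBelow_range_Stransform hfM hM1 y)
    (bddBelow_range_Stransform hfM hM1 y') fun x => ?_
  have := hfM x
  rw [sub_sub_sub_cancel_left, ← sub_div, abs_div, abs_of_pos (by linarith : 0 < 1 - f x)]
  refine div_le_div₀ (by positivity) ?_ (by linarith) (by linarith)
  calc |cos (min (dist x y') (π / 2)) ^ 2 - cos (min (dist x y) (π / 2)) ^ 2|
      ≤ |min (dist x y') (π / 2) - min (dist x y) (π / 2)| := abs_cos_sq_sub_cos_sq_le _ _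
    _ ≤ min (dist y' y) (π / 2) := abs_min_dist_sub_min_dist_le (by positivity) x y' y
    _ = min (dist y y') (π / 2) := by rw [dist_comm]

theorem Stransform_lipschitzWith (hfM : ∀ x, f x ≤ M) (hM1 : M < 1) :
    LipschitzWith (1 / (1 - M)).toNNReal (Stransform f) := by
  refine LipschitzWith.of_dist_le_mul fun y y' => ?_
  have : 0 < 1 - M := by linarith
  rw [Real.dist_eq, Real.coe_toNNReal _ (by positivity), one_div_mul_eq_div]
  exact (abs_Stransform_sub_le hfM hM1 y y').trans (by gcongr; exact min_le_left _ _)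

end Stransform

theorem Stransform_bounded_continuous_lipschitz_general {X : Type*} [MetricSpace X]
    (f : X → ℝ) (M : ℝ) (hb : ∃ C, ∀ x, |f x| ≤ C)
    (hM : IsLUB (Set.range f) M) (hM1 : M < 1) :
    (∃ C, ∀ y, |Stransform f y| ≤ C) ∧
    Continuous (Stransform f) ∧
    (∃ c < (1 : ℝ), ∀ y, Stransform f y ≤ c) ∧
    (∀ y y' : X, |Stransform f y - Stransform f y'| ≤
      2 * min (dist y y') (π / 2) / (1 - M)) := by
  have hfM : ∀ x, f x ≤ M := fun x => hM.1 ⟨x, rfl⟩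
  obtain ⟨C, hC⟩ := hb
  refine ⟨⟨max |1 - 1 / (1 - M)| |1|, fun y => abs_le_max_abs_abs
      (one_sub_inv_le_Stransform hfM hM1 y) (Stransform_le_one hfM hM1 y)⟩,
    (Stransform_lipschitzWith hfM hM1).continuous,
    ⟨1 - 1 / (1 + |C|), sub_lt_self _ (by positivity), fun y => ?_⟩, fun y y' => ?_⟩
  · have hfy : -|C| ≤ f y := (neg_le_neg (le_abs_self C)).trans (abs_le.1 (hC y)).1
    have := hfM y
    refine (Stransform_le_one_sub_inv hfM hM1 y).trans ?_
    gcongr 1 - 1 / ?_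
    · linarith
    · linarith
  · have : 0 < 1 - M := by linarith
    refine (abs_Stransform_sub_le hfM hM1 y y').trans ?_
    gcongr
    exact le_mul_of_one_le_left (le_min dist_nonneg (by positivity)) one_le_two

theorem Stransform_bounded_continuous_lipschitz {X : Type*} [MetricSpace X]
    (f : X → ℝ) (M : ℝ) (hc : Continuous f) (hb : ∃ C, ∀ x, |f x| ≤ C)
    (hM : IsLUB (Set.range f) M) (hM1 : M < 1) :
    (∃ C, ∀ y, |Stransform f y| ≤ C) ∧
    Continuous (Stransform f) ∧
    (∃ c < (1 : ℝ), ∀ y, Stransform f y ≤ c) ∧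
    (∀ y y' : X, |Stransform f y - Stransform f y'| ≤
      2 * min (dist y y') (π / 2) / (1 - M)) :=
  Stransform_bounded_continuous_lipschitz_general f M hb hM hM1
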